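/- arXiv:math/0106117 — 7 statements merged into one kernel-verified Lean document; each statement's English description precedes it below -/
import Mathlib

section
/- Let A be a simple C*-algebra and (a_λ) a bounded increasing net of positive elements of A converging in the strong topology of the second dual A** to an element a of the center Z(A**). Then a is a scalar multiple of the identity. -/
/-!
`T` is a strong limit of the positive increasing net, so it is self-adjoint and `a i ≤ T`.
Suppose its spectrum contains points `s < t`, and pick `s < c < d < t`. The operator
`Q = (c - T)₊` commutes with `A` because `T` does, and for every `i` the element `(a i - d)₊` of
`A` satisfies `(a i - d)₊ Q = 0`: on the range of `Q` we have `a i ≤ T ≤ c`, on the range of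
`(a i - d)₊` we have `a i ≥ d`. Hence `{b ∈ A | b Q = 0}` is a closed two-sided ideal of `A`. If it
is zero, every `a i ≤ d`, so `T ≤ d < t`; if it is all of `A`, then `Q = 0`, although `c - s > 0`
lies in its spectrum. So the spectrum of `T` is a single point and `T` is a scalar.
-/

open Filter Topology

namespace ContinuousLinearMap

variable {𝕜 E ι : Type*} [RCLike 𝕜] [NormedAddCommGroup E] [InnerProductSpace 𝕜 E]
  {l : Filter ι} [l.NeBot] {b : ι → E →L[𝕜] E} {S R : E →L[𝕜] E}

theorem isPositive_of_tendsto_apply (hconv : ∀ x, Tendsto (fun i ↦ b i x) l (𝓝 (S x)))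
    (hb : ∀ᶠ i in l, (b i).IsPositive) : S.IsPositive := by
  refine ⟨fun x y ↦ ?_, fun x ↦ ?_⟩
  · refine tendsto_nhds_unique ((hconv x).inner tendsto_const_nhds) ?_
    refine (tendsto_const_nhds.inner (hconv y)).congr' ?_
    filter_upwards [hb] with i hi using (hi.inner_left_eq_inner_right x y).symm
  · exact ge_of_tendsto ((RCLike.continuous_re.tendsto _).comp ((hconv x).inner tendsto_const_nhds))
      (hb.mono fun i hi ↦ hi.2 x)

theorem le_of_tendsto_apply (hconv : ∀ x, Tendsto (fun i ↦ b i x) l (𝓝 (S x)))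
    (hb : ∀ᶠ i in l, b i ≤ R) : S ≤ R :=
  isPositive_of_tendsto_apply (fun x ↦ tendsto_const_nhds.sub (hconv x)) hb

theorem ge_of_tendsto_apply (hconv : ∀ x, Tendsto (fun i ↦ b i x) l (𝓝 (S x)))
    (hb : ∀ᶠ i in l, R ≤ b i) : R ≤ S :=
  isPositive_of_tendsto_apply (fun x ↦ (hconv x).sub tendsto_const_nhds) hb

end ContinuousLinearMap

section CStarAlgebra

variable {A : Type*} [CStarAlgebra A]

theorem cfc_eq_zero_iff {a : A} {f : ℝ → ℝ}
    (hf : ContinuousOn f (spectrum ℝ a) := by cfc_cont_tac) (ha : IsSelfAdjoint a := by cfc_tac) :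
    cfc f a = 0 ↔ ∀ x ∈ spectrum ℝ a, f x = 0 := by
  rw [← cfc_zero ℝ a, cfc_eq_cfc_iff_eqOn]
  rfl

theorem IsSelfAdjoint.exists_eq_algebraMap {a : A} (ha : IsSelfAdjoint a)
    (h : (spectrum ℝ a).Subsingleton) : ∃ c : ℝ, a = algebraMap ℝ A c := by
  rcases h.eq_empty_or_singleton with h | ⟨c, h⟩
  · exact ⟨0, CFC.eq_algebraMap_of_spectrum_subset_singleton a 0 (h ▸ Set.empty_subset _)⟩
  · exact ⟨c, CFC.eq_algebraMap_of_spectrum_subset_singleton a c h.subset⟩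

theorem cfc_mul_mul_cfc_sub_smul (a : A) (f : ℝ → ℝ) (c : ℝ)
    (hf : ContinuousOn f (spectrum ℝ a) := by cfc_cont_tac) (ha : IsSelfAdjoint a := by cfc_tac) :
    cfc f a * a * cfc f a - c • (cfc f a * cfc f a) = cfc (fun x ↦ (x - c) * f x ^ 2) a := by
  have : (fun x ↦ (x - c) * f x ^ 2) = fun x ↦ f x * x * f x - c * (f x * f x) := by
    ext; ring
  rw [this, cfc_sub .., cfc_mul (fun x ↦ f x * x) f a, cfc_mul f (fun x ↦ x) a, cfc_id' ℝ a,
    cfc_const_mul c _ a, cfc_mul f f a]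

variable [PartialOrder A] [StarOrderedRing A]

theorem IsSelfAdjoint.eq_zero_of_smul_mul_self_le {x : A} (hx : IsSelfAdjoint x) {c d : ℝ}
    (hcd : c < d) (h : d • (x * x) ≤ c • (x * x)) : x = 0 := by
  have hsq : 0 ≤ x * x := hx.mul_self_nonneg
  have h0 : (d - c) • (x * x) = 0 :=
    le_antisymm (by rwa [sub_smul, sub_nonpos]) (smul_nonneg (sub_nonneg.2 hcd.le) hsq)
  rw [smul_eq_zero, sub_eq_zero] at h0
  rw [← CStarRing.star_mul_self_eq_zero_iff, hx.star_eq]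
  exact h0.resolve_left hcd.ne'

theorem mul_eq_zero_of_conj_le_of_le_conj {P Q r : A} {c d : ℝ} (hcd : c < d)
    (hQ : IsSelfAdjoint Q) (hr : IsSelfAdjoint r) (hQr : Commute Q r)
    (hQPQ : Q * P * Q ≤ c • (Q * Q)) (hrPr : d • (r * r) ≤ r * P * r) : r * Q = 0 := by
  have hX : IsSelfAdjoint (r * Q) := by
    rw [IsSelfAdjoint, star_mul, hQ.star_eq, hr.star_eq, hQr.eq]
  refine hX.eq_zero_of_smul_mul_self_le hcd ?_
  calc d • (r * Q * (r * Q)) = Q * (d • (r * r)) * Q := by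
        simp only [smul_mul_assoc, mul_smul_comm, mul_assoc, hQr.eq, hQr.left_comm]
    _ ≤ Q * (r * P * r) * Q := hQ.conjugate_le_conjugate hrPr
    _ = r * (Q * P * Q) * r := by simp only [mul_assoc, hQr.eq, hQr.left_comm]
    _ ≤ r * (c • (Q * Q)) * r := hr.conjugate_le_conjugate hQPQ
    _ = c • (r * Q * (r * Q)) := by
        simp only [smul_mul_assoc, mul_smul_comm, mul_assoc, hQr.eq, hQr.left_comm]

theorem cfc_mul_mul_cfc_le_smul {a : A} {f : ℝ → ℝ} {c : ℝ}
    (hf : ∀ x ∈ spectrum ℝ a, c < x → f x = 0)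
    (hfc : ContinuousOn f (spectrum ℝ a) := by cfc_cont_tac) (ha : IsSelfAdjoint a := by cfc_tac) :
    cfc f a * a * cfc f a ≤ c • (cfc f a * cfc f a) := by
  rw [← sub_nonpos, cfc_mul_mul_cfc_sub_smul a f c]
  refine cfc_nonpos _ a fun x hx ↦ ?_
  rcases le_or_gt x c with hxc | hxc
  · exact mul_nonpos_of_nonpos_of_nonneg (sub_nonpos.2 hxc) (sq_nonneg _)
  · simp [hf x hx hxc]

theorem smul_le_cfc_mul_mul_cfc {a : A} {f : ℝ → ℝ} {d : ℝ}
    (hf : ∀ x ∈ spectrum ℝ a, x < d → f x = 0)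
    (hfc : ContinuousOn f (spectrum ℝ a) := by cfc_cont_tac) (ha : IsSelfAdjoint a := by cfc_tac) :
    d • (cfc f a * cfc f a) ≤ cfc f a * a * cfc f a := by
  rw [← sub_nonneg, cfc_mul_mul_cfc_sub_smul a f d]
  refine cfc_nonneg fun x hx ↦ ?_
  rcases le_or_gt d x with hxd | hxd
  · exact mul_nonneg (sub_nonneg.2 hxd) (sq_nonneg _)
  · simp [hf x hx hxd]

theorem cfc_mul_cfc_eq_zero_of_le {a b : A} {f g : ℝ → ℝ} {c d : ℝ} (hcd : c < d) (hab : a ≤ b)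
    (hcomm : Commute a (cfc f b))
    (hf : ∀ x ∈ spectrum ℝ b, c < x → f x = 0) (hg : ∀ x ∈ spectrum ℝ a, x < d → g x = 0)
    (hfc : ContinuousOn f (spectrum ℝ b) := by cfc_cont_tac)
    (hgc : ContinuousOn g (spectrum ℝ a) := by cfc_cont_tac)
    (ha : IsSelfAdjoint a := by cfc_tac) (hb : IsSelfAdjoint b := by cfc_tac) :
    cfc g a * cfc f b = 0 :=
  mul_eq_zero_of_conj_le_of_le_conj hcd (cfc_predicate f b) (cfc_predicate g a)
    (hcomm.cfc_real g).symm
    (((cfc_predicate f b).conjugate_le_conjugate hab).trans (cfc_mul_mul_cfc_le_smul hf))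
    (smul_le_cfc_mul_mul_cfc hg)

end CStarAlgebra

namespace TwoSidedIdeal

variable {R S : Type*} [Ring R] [SetLike S R] [SubringClass S R]

def annihilator (s : S) (q : R) (hq : ∀ b ∈ s, Commute b q) : TwoSidedIdeal s :=
  .mk' {b | (b : R) * q = 0} (by simp) (fun hx hy ↦ by simp_all [add_mul])
    (fun hx ↦ by simp_all) (fun hy ↦ by simp_all [mul_assoc])
    (fun {x y} hx ↦ by
      simp only [Set.mem_ofPred_eq, MulMemClass.coe_mul] at hx ⊢
      rw [mul_assoc, (hq y y.2).eq, ← mul_assoc, hx, zero_mul])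

variable {s : S} {q : R} {hq : ∀ b ∈ s, Commute b q}

theorem mem_annihilator {b : s} : b ∈ annihilator s q hq ↔ (b : R) * q = 0 :=
  TwoSidedIdeal.mem_mk' ..

theorem isClosed_annihilator [TopologicalSpace R] [ContinuousMul R] [T1Space R] :
    IsClosed (annihilator s q hq : Set s) := by
  have : (annihilator s q hq : Set s) = (fun b : s ↦ (b : R) * q) ⁻¹' {0} := by
    ext; exact mem_annihilator
  rw [this]
  exact isClosed_singleton.preimage (continuous_subtype_val.mul continuous_const)

end TwoSidedIdeal

open TwoSidedIdeal in
theorem spectrum_subsingleton_of_tendsto {H ι : Type*} [NormedAddCommGroup H]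
    [InnerProductSpace ℂ H] [CompleteSpace H] {A : StarSubalgebra ℂ (H →L[ℂ] H)}
    (hclosed : IsClosed (A : Set (H →L[ℂ] H)))
    (hsimple : ∀ I : TwoSidedIdeal A, IsClosed (I : Set A) → I = ⊥ ∨ I = ⊤)
    {l : Filter ι} [l.NeBot] {a : ι → A} (ha : ∀ i, IsSelfAdjoint (a i : H →L[ℂ] H))
    {T : H →L[ℂ] H} (hT : IsSelfAdjoint T)
    (hconv : ∀ x, Tendsto (fun i ↦ (a i : H →L[ℂ] H) x) l (𝓝 (T x)))
    (hle : ∀ i, (a i : H →L[ℂ] H) ≤ T) (hTA : ∀ b ∈ A, Commute T b) :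
    (spectrum ℝ T).Subsingleton := by
  suffices key : ∀ s ∈ spectrum ℝ T, ∀ t ∈ spectrum ℝ T, ¬ s < t from
    fun s hs t ht ↦ le_antisymm (not_lt.1 (key t ht s hs)) (not_lt.1 (key s hs t ht))
  intro s hs t ht hst
  obtain ⟨c, hsc, hct⟩ := exists_between hst
  obtain ⟨d, hcd, hdt⟩ := exists_between hct
  set Q := cfc (fun x ↦ max 0 (c - x)) T
  have hQA : ∀ b ∈ A, Commute b Q := fun b hb ↦ ((hTA b hb).cfc_real _).symm
  have hann : ∀ i, cfc (fun x ↦ max 0 (x - d)) (a i : H →L[ℂ] H) * Q = 0 := fun i ↦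
    cfc_mul_cfc_eq_zero_of_le hcd (hle i) (hQA _ (a i).2)
      (fun x _ hx ↦ max_eq_left (by linarith)) (fun x _ hx ↦ max_eq_left (by linarith))
      (ha := ha i)
  rcases hsimple (annihilator A Q hQA) isClosed_annihilator with hbot | htop
  · have hbdd : ∀ i, (a i : H →L[ℂ] H) ≤ algebraMap ℝ _ d := fun i ↦ by
      have hmem : (⟨_, cfc_mem (hs := hclosed) _ (a i).2⟩ : A) ∈ annihilator A Q hQA :=
        mem_annihilator.2 (hann i)
      rw [hbot, TwoSidedIdeal.mem_bot] at hmem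
      have h0 := (cfc_eq_zero_iff (ha := ha i)).1 (congrArg Subtype.val hmem)
      exact le_algebraMap_of_spectrum_le fun x hx ↦ sub_nonpos.1 (max_eq_left_iff.1 (h0 x hx))
    have hTd := ContinuousLinearMap.le_of_tendsto_apply hconv (.of_forall hbdd)
    have := (le_algebraMap_iff_spectrum_le hT).1 hTd t ht
    linarith
  · have hQ : 1 * Q = 0 := (mem_annihilator (b := 1)).1 (htop ▸ TwoSidedIdeal.mem_top _)
    rw [one_mul] at hQ
    have := max_eq_left_iff.1 ((cfc_eq_zero_iff (ha := hT)).1 hQ s hs)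
    linarith

theorem stmt_0_general {H : Type*} [NormedAddCommGroup H] [InnerProductSpace ℂ H] [CompleteSpace H]
    (A : StarSubalgebra ℂ (H →L[ℂ] H)) (hclosed : IsClosed (A : Set (H →L[ℂ] H)))
    (hsimple : ∀ I : TwoSidedIdeal A, IsClosed (I : Set A) → I = ⊥ ∨ I = ⊤)
    {ι : Type*} [Preorder ι] [IsDirected ι (· ≤ ·)] [Nonempty ι]
    (a : ι → A)
    (hpos : ∀ i, (a i : H →L[ℂ] H).IsPositive)
    (hmono : ∀ i j, i ≤ j → ((a j : H →L[ℂ] H) - (a i : H →L[ℂ] H)).IsPositive)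
    (T : H →L[ℂ] H)
    (hconv : ∀ x : H,
      Filter.Tendsto (fun i => (a i : H →L[ℂ] H) x) Filter.atTop (nhds (T x)))
    (hT1 : ∀ b : A, T * (b : H →L[ℂ] H) = (b : H →L[ℂ] H) * T) :
    ∃ c : ℂ, T = c • (1 : H →L[ℂ] H) := by
  have hT : IsSelfAdjoint T :=
    (ContinuousLinearMap.isPositive_of_tendsto_apply hconv (.of_forall hpos)).isSelfAdjoint
  have hle : ∀ i, (a i : H →L[ℂ] H) ≤ T := fun i ↦
    ContinuousLinearMap.ge_of_tendsto_apply hconv (eventually_atTop.2 ⟨i, hmono i⟩)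
  obtain ⟨c, hc⟩ := hT.exists_eq_algebraMap <| spectrum_subsingleton_of_tendsto hclosed hsimple
    (fun i ↦ (hpos i).isSelfAdjoint) hT hconv hle fun b hb ↦ hT1 ⟨b, hb⟩
  exact ⟨c, by rw [hc, Algebra.algebraMap_eq_smul_one, Complex.coe_smul]⟩

/-- Let `A` be a simple C*-algebra (realized faithfully and
nondegenerately on a Hilbert space `H`), and `(a i)` a bounded increasing net of
positive elements of `A` converging in the strong (operator) topology to an
element `T` of the center of the enveloping von Neumann algebra of `A`
(i.e. `T` commutes with `A` and with the commutant of `A`).  Then `T` is a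
scalar multiple of the identity. -/
theorem stmt_0 {H : Type*} [NormedAddCommGroup H] [InnerProductSpace ℂ H] [CompleteSpace H]
    (A : StarSubalgebra ℂ (H →L[ℂ] H)) (hclosed : IsClosed (A : Set (H →L[ℂ] H)))
    (hfaithful_nondeg :
      Dense (Submodule.span ℂ {y : H | ∃ b : A, ∃ x : H, (b : H →L[ℂ] H) x = y} : Set H))
    (hsimple : ∀ I : TwoSidedIdeal A, IsClosed (I : Set A) → I = ⊥ ∨ I = ⊤)
    {ι : Type*} [Preorder ι] [IsDirected ι (· ≤ ·)] [Nonempty ι]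
    (a : ι → A)
    (hpos : ∀ i, (a i : H →L[ℂ] H).IsPositive)
    (hmono : ∀ i j, i ≤ j → ((a j : H →L[ℂ] H) - (a i : H →L[ℂ] H)).IsPositive)
    (hbdd : ∃ C : ℝ, ∀ i, ‖(a i : H →L[ℂ] H)‖ ≤ C)
    (T : H →L[ℂ] H)
    (hconv : ∀ x : H,
      Filter.Tendsto (fun i => (a i : H →L[ℂ] H) x) Filter.atTop (nhds (T x)))
    (hT1 : ∀ b : A, T * (b : H →L[ℂ] H) = (b : H →L[ℂ] H) * T)
    (hT2 : ∀ S : H →L[ℂ] H, (∀ b : A, S * (b : H →L[ℂ] H) = (b : H →L[ℂ] H) * S) →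
      T * S = S * T) :
    ∃ c : ℂ, T = c • (1 : H →L[ℂ] H) :=
  stmt_0_general A hclosed hsimple a hpos hmono T hconv hT1
end

section
/- Let A be a unital simple C*-algebra and (a_λ) a bounded increasing net of positive elements of A converging strongly in A** to a scalar c·1. Then (a_λ) converges to c·1 in norm. -/
/-!
Put `b i = c • 1 - a i`. For a positive functional `φ`, `φ (a i)` increases to `c * φ 1`, so
`φ (b i) ≥ 0`; positive functionals detect positivity, because every point of the spectrum of a
self-adjoint element is the value of a state (a character of the algebra it generates, extended by
Hahn–Banach; unital contractions are positive). Hence `b` is a decreasing net of positive elements,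
and `ψ ↦ re (ψ (b i))` decreases pointwise to `0` on the weak-* compact set of positive
functionals of norm at most one. By Dini the convergence is uniform there, and `‖b i‖` is attained
on that set, so `‖b i‖ → 0`.
-/

open scoped ComplexOrder
open Filter Topology Metric

namespace WeakDual

lemma isClosed_setOf_nonneg_apply {E : Type*} [NormedAddCommGroup E] [NormedSpace ℂ E] [LE E] :
    IsClosed {ψ : WeakDual ℂ E | ∀ y, 0 ≤ y → 0 ≤ ψ y} := by
  simp only [Set.ofPred_forall]
  exact isClosed_iInter fun y => isClosed_iInter fun _ =>
    isClosed_Ici.preimage (eval_continuous y)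

lemma isCompact_closedBall_inter_setOf_nonneg_apply {E : Type*} [NormedAddCommGroup E]
    [NormedSpace ℂ E] [LE E] :
    IsCompact (toStrongDual ⁻¹' closedBall 0 1 ∩ {ψ : WeakDual ℂ E | ∀ y, 0 ≤ y → 0 ≤ ψ y}) :=
  (isCompact_closedBall 0 1).inter_right isClosed_setOf_nonneg_apply

end WeakDual

namespace CStarAlgebra

variable {A : Type*} [CStarAlgebra A]

lemma norm_one_le_one : ‖(1 : A)‖ ≤ 1 := by
  rcases subsingleton_or_nontrivial A with _ | _
  · simp [Subsingleton.elim (1 : A) 0]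
  · exact CStarRing.norm_one.le

lemma norm_add_smul_I_one_sq_le {x : A} (hx : IsSelfAdjoint x) (n : ℝ) :
    ‖x + ((n : ℂ) * Complex.I) • (1 : A)‖ ^ 2 ≤ ‖x‖ ^ 2 + n ^ 2 := by
  set y := x + ((n : ℂ) * Complex.I) • (1 : A)
  have hstar : star y = x - ((n : ℂ) * Complex.I) • 1 := by
    simp [y, star_smul, hx.star_eq, sub_eq_add_neg]
  have hmul : star y * y = x * x + ((n : ℂ) ^ 2) • 1 := by
    have hI : (n : ℂ) * Complex.I * ((n : ℂ) * Complex.I) = -(n : ℂ) ^ 2 := by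
      linear_combination (n : ℂ) ^ 2 * Complex.I_mul_I
    rw [hstar, sub_mul, mul_add, mul_add, smul_mul_assoc, mul_smul_comm, smul_mul_assoc]
    simp only [one_mul, mul_one, smul_smul, hI, neg_smul]
    abel
  calc ‖y‖ ^ 2 = ‖x * x + ((n : ℂ) ^ 2) • (1 : A)‖ := by
        rw [← hmul, CStarRing.norm_star_mul_self, sq]
    _ ≤ ‖x * x‖ + ‖((n : ℂ) ^ 2) • (1 : A)‖ := norm_add_le _ _
    _ ≤ ‖x‖ ^ 2 + n ^ 2 := by
        gcongr
        · rw [hx.norm_mul_self]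
        · rw [norm_smul, ← Complex.ofReal_pow, Complex.norm_real, Real.norm_of_nonneg (sq_nonneg n)]
          exact mul_le_of_le_one_right (sq_nonneg n) norm_one_le_one

lemma im_apply_eq_zero_of_isSelfAdjoint {φ : A →L[ℂ] ℂ} (hφ : ‖φ‖ ≤ 1) (h1 : φ 1 = 1) {x : A}
    (hx : IsSelfAdjoint x) : (φ x).im = 0 := by
  have key (n : ℝ) : (φ x).re ^ 2 + ((φ x).im + n) ^ 2 ≤ ‖x‖ ^ 2 + n ^ 2 := by
    have hφx : φ (x + ((n : ℂ) * Complex.I) • 1) = φ x + n * Complex.I := by simp [h1]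
    calc (φ x).re ^ 2 + ((φ x).im + n) ^ 2 = ‖φ (x + ((n : ℂ) * Complex.I) • 1)‖ ^ 2 := by
          rw [hφx, Complex.sq_norm, Complex.normSq_apply]
          simp only [Complex.add_re, Complex.add_im, Complex.mul_I_re, Complex.mul_I_im,
            Complex.ofReal_re, Complex.ofReal_im, neg_zero, add_zero]
          ring
      _ ≤ ‖x + ((n : ℂ) * Complex.I) • (1 : A)‖ ^ 2 := by
          gcongr; exact φ.le_of_opNorm_le hφ _ |>.trans_eq (one_mul _)
      _ ≤ ‖x‖ ^ 2 + n ^ 2 := norm_add_smul_I_one_sq_le hx n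
  have hbdd (n : ℝ) : 2 * (φ x).im * n ≤ ‖x‖ ^ 2 := by
    nlinarith [key n, sq_nonneg (φ x).re, sq_nonneg (φ x).im]
  by_contra ht
  have := hbdd ((‖x‖ ^ 2 + 1) / (2 * (φ x).im))
  rw [mul_div_cancel₀ _ (mul_ne_zero two_ne_zero ht)] at this
  linarith

lemma exists_norm_le_one_apply_eq_of_mem_spectrum (x : A) [IsStarNormal x] {z : ℂ}
    (hz : z ∈ spectrum ℂ x) : ∃ φ : A →L[ℂ] ℂ, ‖φ‖ ≤ 1 ∧ φ 1 = 1 ∧ φ x = z := by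
  rcases subsingleton_or_nontrivial A with _ | _
  · simp [spectrum.of_subsingleton] at hz
  set S := StarAlgebra.elemental ℂ x
  have hzS : z ∈ spectrum ℂ (⟨x, StarAlgebra.elemental.self_mem ℂ x⟩ : S) := by
    rwa [StarSubalgebra.spectrum_eq (hS := StarAlgebra.elemental.isClosed ℂ x)]
  obtain ⟨χ, hχ⟩ := WeakDual.CharacterSpace.mem_spectrum_iff_exists.mp hzS
  let f : StrongDual ℂ S := (χ : WeakDual ℂ S)
  have hf : ‖f‖ ≤ 1 := by
    refine ContinuousLinearMap.opNorm_le_bound _ zero_le_one fun y => ?_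
    rw [one_mul]
    exact spectrum.norm_le_norm_of_mem
      (AlgHom.apply_mem_spectrum (WeakDual.CharacterSpace.toAlgHom χ) y)
  obtain ⟨φ, hφf, hφ⟩ := exists_extension_norm_eq (Subalgebra.toSubmodule S.toSubalgebra) f
  refine ⟨φ, hφ ▸ hf, ?_, ?_⟩
  · exact (hφf ⟨1, one_mem S⟩).trans (map_one χ)
  · exact (hφf ⟨x, StarAlgebra.elemental.self_mem ℂ x⟩).trans hχ

variable [PartialOrder A] [StarOrderedRing A]

lemma nonneg_apply_of_norm_le_one {φ : A →L[ℂ] ℂ} (hφ : ‖φ‖ ≤ 1) (h1 : φ 1 = 1) {x : A}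
    (hx : 0 ≤ x) : 0 ≤ φ x := by
  set r : ℝ := ‖x‖
  have hnorm : ‖algebraMap ℝ A r - x‖ ≤ r := by
    refine (norm_le_iff_le_algebraMap _ (norm_nonneg x) ?_).mpr (sub_le_self _ hx)
    exact sub_nonneg.mpr (IsSelfAdjoint.of_nonneg hx).le_algebraMap_norm_self
  have hφr : φ (algebraMap ℝ A r - x) = r - φ x := by
    simp [Algebra.algebraMap_eq_smul_one, φ.map_smul_of_tower, h1, Complex.real_smul]
  have hre : |r - (φ x).re| ≤ r := by
    calc |r - (φ x).re| ≤ ‖(r : ℂ) - φ x‖ := by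
          simpa using Complex.abs_re_le_norm ((r : ℂ) - φ x)
      _ ≤ r := by
          rw [← hφr]
          exact (φ.le_of_opNorm_le hφ _).trans (by rw [one_mul]; exact hnorm)
  rw [Complex.nonneg_iff, im_apply_eq_zero_of_isSelfAdjoint hφ h1 (.of_nonneg hx)]
  exact ⟨by linarith [(abs_le.mp hre).2], rfl⟩

lemma exists_nonneg_apply_eq_of_mem_spectrum {x : A} (hx : IsSelfAdjoint x) {z : ℂ}
    (hz : z ∈ spectrum ℂ x) :
    ∃ φ : A →L[ℂ] ℂ, ‖φ‖ ≤ 1 ∧ (∀ y, 0 ≤ y → 0 ≤ φ y) ∧ φ x = z := by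
  have := hx.isStarNormal
  obtain ⟨φ, hφ, h1, hφx⟩ := exists_norm_le_one_apply_eq_of_mem_spectrum x hz
  exact ⟨φ, hφ, fun _ hy => nonneg_apply_of_norm_le_one hφ h1 hy, hφx⟩

lemma nonneg_of_forall_nonneg_apply {x : A} (hx : IsSelfAdjoint x)
    (h : ∀ φ : A →L[ℂ] ℂ, (∀ y, 0 ≤ y → 0 ≤ φ y) → 0 ≤ φ x) : 0 ≤ x := by
  rw [StarOrderedRing.nonneg_iff_spectrum_nonneg (R := ℝ) x hx]
  intro t ht
  obtain ⟨φ, -, hφ, hφx⟩ :=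
    exists_nonneg_apply_eq_of_mem_spectrum hx (spectrum.algebraMap_mem ℂ ht)
  have := h φ hφ
  rw [hφx] at this
  exact Complex.zero_le_real.mp this

lemma exists_nonneg_apply_eq_norm {x : A} (hx : 0 ≤ x) :
    ∃ φ : A →L[ℂ] ℂ, ‖φ‖ ≤ 1 ∧ (∀ y, 0 ≤ y → 0 ≤ φ y) ∧ φ x = ‖x‖ := by
  rcases subsingleton_or_nontrivial A with _ | _
  · exact ⟨0, by simp, fun _ _ => le_rfl, by simp [Subsingleton.elim x 0]⟩
  exact exists_nonneg_apply_eq_of_mem_spectrum (.of_nonneg hx)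
    (spectrum.algebraMap_mem ℂ (norm_mem_spectrum_of_nonneg hx))

theorem tendsto_zero_of_antitone_of_forall_nonneg_apply {ι : Type*} [Preorder ι] {b : ι → A}
    (hb : ∀ i, 0 ≤ b i) (hanti : Antitone b)
    (h : ∀ φ : A →L[ℂ] ℂ, (∀ y, 0 ≤ y → 0 ≤ φ y) → Tendsto (fun i => φ (b i)) atTop (𝓝 0)) :
    Tendsto b atTop (𝓝 0) := by
  have hunif : TendstoUniformlyOn (fun i (ψ : WeakDual ℂ A) => (ψ (b i)).re) 0 atTop
      (WeakDual.toStrongDual ⁻¹' closedBall 0 1 ∩ {ψ | ∀ y, 0 ≤ y → 0 ≤ ψ y}) := by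
    refine Antitone.tendstoUniformlyOn_of_forall_tendsto
      WeakDual.isCompact_closedBall_inter_setOf_nonneg_apply
      (fun i => (Complex.continuous_re.comp (WeakDual.eval_continuous _)).continuousOn)
      (fun ψ hψ i j hij => ?_) continuousOn_const (fun ψ hψ => ?_)
    · have := hψ.2 _ (sub_nonneg.mpr (hanti hij))
      rw [map_sub, sub_nonneg] at this
      exact (Complex.le_def.mp this).1
    · exact (Complex.continuous_re.tendsto 0).comp (h ψ hψ.2)
  rw [Metric.tendstoUniformlyOn_iff] at hunif
  rw [Metric.tendsto_nhds]
  intro ε hε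
  filter_upwards [hunif ε hε] with i hi
  obtain ⟨φ, hφ, hφpos, hφb⟩ := exists_nonneg_apply_eq_norm (hb i)
  have : dist 0 (φ (b i)).re < ε := hi φ ⟨mem_closedBall_zero_iff.mpr hφ, hφpos⟩
  simpa [hφb] using this

end CStarAlgebra

theorem stmt_1_general {A : Type*} [NormedRing A] [StarRing A] [CStarRing A] [NormedAlgebra ℂ A]
    [StarModule ℂ A] [CompleteSpace A] [PartialOrder A] [StarOrderedRing A]
    {ι : Type*} [Preorder ι] [IsDirected ι (· ≤ ·)]
    (a : ι → A) (hpos : ∀ i, 0 ≤ a i) (hmono : Monotone a) (c : ℝ)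
    (hconv : ∀ φ : A →L[ℂ] ℂ, (∀ x : A, 0 ≤ x → 0 ≤ φ x) →
      Filter.Tendsto (fun i => φ (a i)) Filter.atTop (nhds ((c : ℂ) * φ 1))) :
    Filter.Tendsto a Filter.atTop (nhds ((c : ℂ) • (1 : A))) := by
  let _ : CStarAlgebra A := {}
  set b : ι → A := fun i => (c : ℂ) • (1 : A) - a i
  have hφb (φ : A →L[ℂ] ℂ) (i : ι) : φ (b i) = c * φ 1 - φ (a i) := by simp [b]
  have hb_tendsto (φ : A →L[ℂ] ℂ) (hφ : ∀ y, 0 ≤ y → 0 ≤ φ y) :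
      Tendsto (fun i => φ (b i)) atTop (𝓝 0) := by
    simpa [hφb] using (hconv φ hφ).const_sub ((c : ℂ) * φ 1)
  have hb_nonneg (i : ι) : 0 ≤ b i := by
    have hsa : IsSelfAdjoint ((c : ℂ) • (1 : A)) := by simp [IsSelfAdjoint, star_smul]
    refine CStarAlgebra.nonneg_of_forall_nonneg_apply (hsa.sub (.of_nonneg (hpos i))) fun φ hφ => ?_
    have hφa : Monotone fun j => φ (a j) := fun j k hjk => by
      simpa using hφ _ (sub_nonneg.mpr (hmono hjk))
    rw [hφb, sub_nonneg]
    exact hφa.ge_of_tendsto (hconv φ hφ) i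
  have hb : Tendsto b atTop (𝓝 0) :=
    CStarAlgebra.tendsto_zero_of_antitone_of_forall_nonneg_apply hb_nonneg
      (fun i j hij => sub_le_sub_left (hmono hij) _) hb_tendsto
  simpa [b] using hb.const_sub ((c : ℂ) • (1 : A))

/-- Let `A` be a unital simple C*-algebra and `(a i)` a bounded
increasing net of positive elements of `A` converging strongly in `A**` to the
scalar `c • 1` (for bounded increasing nets this is equivalent to convergence
`φ (a i) → c • φ 1` for every positive functional `φ` on `A`).  Then `(a i)`
converges to `c • 1` in norm. -/
theorem stmt_1 {A : Type*} [NormedRing A] [StarRing A] [CStarRing A] [NormedAlgebra ℂ A]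
    [StarModule ℂ A] [CompleteSpace A] [PartialOrder A] [StarOrderedRing A]
    (hsimple : ∀ I : TwoSidedIdeal A, IsClosed (I : Set A) → I = ⊥ ∨ I = ⊤)
    {ι : Type*} [Preorder ι] [IsDirected ι (· ≤ ·)] [Nonempty ι]
    (a : ι → A) (hpos : ∀ i, 0 ≤ a i) (hmono : Monotone a)
    (hbdd : ∃ C : ℝ, ∀ i, ‖a i‖ ≤ C) (c : ℝ)
    (hconv : ∀ φ : A →L[ℂ] ℂ, (∀ x : A, 0 ≤ x → 0 ≤ φ x) →
      Filter.Tendsto (fun i => φ (a i)) Filter.atTop (nhds ((c : ℂ) * φ 1))) :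
    Filter.Tendsto a Filter.atTop (nhds ((c : ℂ) • (1 : A))) :=
  stmt_1_general a hpos hmono c hconv
end

section
/- Let E : A → B be a conditional expectation of a unital C*-algebra A onto B with a quasi-basis {(u_i, v_i)}_{i=1}^n, i.e. a = Σ_i u_i E(v_i a) = Σ_i E(a u_i) v_i for all a ∈ A. Then the element Ind(E) = Σ_i u_i v_i is independent of the choice of quasi-basis and lies in the center of A. -/
/-!
Both claims come from evaluating the double sum `∑ i j, u i * E (v i * a * u' j) * v' j` in two
ways: summing over `i` first collapses it, by the left reproducing identity of `(u, v)`, to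
`a * ∑ j, u' j * v' j`; summing over `j` first collapses it, by the right reproducing identity of
`(u', v')`, to `(∑ i, u i * v i) * a`. Taking `a = 1` gives independence of the quasi-basis, and
taking `(u', v') = (u, v)` gives centrality.
-/

open Finset

theorem mul_sum_mul_eq_sum_mul_mul {A ι κ : Type*} [NonUnitalSemiring A] [Fintype ι] [Fintype κ]
    (E : A → A) (u v : ι → A) (u' v' : κ → A)
    (hleft : ∀ a : A, a = ∑ i, u i * E (v i * a))
    (hright : ∀ a : A, a = ∑ j, E (a * u' j) * v' j) (a : A) :
    a * ∑ j, u' j * v' j = (∑ i, u i * v i) * a :=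
  calc a * ∑ j, u' j * v' j
      = ∑ j, (∑ i, u i * E (v i * (a * u' j))) * v' j := by
        rw [mul_sum]
        exact sum_congr rfl fun j _ => by rw [← hleft, mul_assoc]
    _ = ∑ i, u i * ∑ j, E (v i * a * u' j) * v' j := by
        simp_rw [mul_sum, sum_mul, mul_assoc]
        exact sum_comm
    _ = (∑ i, u i * v i) * a := by
        rw [sum_mul]
        exact sum_congr rfl fun i _ => by rw [← hright, mul_assoc]

theorem stmt_4_general {A : Type*} [NormedRing A] [NormedAlgebra ℂ A]
    (E : A →ₗ[ℂ] A)
    {n m : ℕ} (u v : Fin n → A) (u' v' : Fin m → A)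
    (hqb1 : ∀ a : A, a = ∑ i, u i * E (v i * a))
    (hqb2 : ∀ a : A, a = ∑ i, E (a * u i) * v i)
    (hqb2' : ∀ a : A, a = ∑ j, E (a * u' j) * v' j) :
    (∑ i, u i * v i) = (∑ j, u' j * v' j) ∧ (∑ i, u i * v i) ∈ Set.center A := by
  constructor
  · simpa using (mul_sum_mul_eq_sum_mul_mul E u v u' v' hqb1 hqb2' 1).symm
  · exact Semigroup.mem_center_iff.mpr (mul_sum_mul_eq_sum_mul_mul E u v u v hqb1 hqb2)

/-- Let `E : A → B` be a conditional expectation of a unital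
C*-algebra `A` onto `B` with a quasi-basis `{(u i, v i)}`.  Then the element
`Ind E = ∑ u i * v i` is independent of the choice of quasi-basis and lies in
the center of `A`. -/
theorem stmt_4 {A : Type*} [NormedRing A] [StarRing A] [CStarRing A] [NormedAlgebra ℂ A]
    [StarModule ℂ A] [CompleteSpace A]
    (B : StarSubalgebra ℂ A)
    (E : A →ₗ[ℂ] A)
    (hrange : ∀ x : A, E x ∈ B)
    (hfix : ∀ b ∈ B, E b = b)
    (hleft : ∀ b ∈ B, ∀ x : A, E (b * x) = b * E x)
    (hright : ∀ b ∈ B, ∀ x : A, E (x * b) = E x * b)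
    {n m : ℕ} (u v : Fin n → A) (u' v' : Fin m → A)
    (hqb1 : ∀ a : A, a = ∑ i, u i * E (v i * a))
    (hqb2 : ∀ a : A, a = ∑ i, E (a * u i) * v i)
    (hqb1' : ∀ a : A, a = ∑ j, u' j * E (v' j * a))
    (hqb2' : ∀ a : A, a = ∑ j, E (a * u' j) * v' j) :
    (∑ i, u i * v i) = (∑ j, u' j * v' j) ∧ (∑ i, u i * v i) ∈ Set.center A :=
  stmt_4_general E u v u' v' hqb1 hqb2 hqb2'
end

section
/- Let p be a rank-one projection in M_n(ℂ), B = pM_n(ℂ)p ⊕ (1−p)M_n(ℂ)(1−p), and E(x) = pxp + (1−p)x(1−p) the conditional expectation from M_n(ℂ) onto B. If {(u_i, u_i*)}_{i=1}^m is a quasi-basis for E, then necessarily m ≥ n. -/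
/-!
Testing the quasi-basis identity `x = ∑ i, uᵢ E(uᵢ⋆ x)` on the matrix units `x = e_{k1}`, which
satisfy `x p = x` and `x (1 - p) = 0`, turns it into `∑ i, uᵢ p uᵢ⋆ = 1`. The left side is a sum of
`m` matrices of rank at most `rank p = 1`, while the identity has rank `n`.
-/

namespace Matrix

variable {l m n o ι K : Type*} [Fintype n] [Field K]

theorem rank_add_le [Fintype m] (A B : Matrix m n K) : (A + B).rank ≤ A.rank + B.rank := by
  rw [rank, rank, rank, mulVecLin_add]
  exact (Submodule.finrank_mono (LinearMap.range_add_le _ _)).trans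
    (Submodule.finrank_add_le_finrank_add_finrank _ _)

theorem rank_sum_le [Fintype m] (s : Finset ι) (A : ι → Matrix m n K) :
    (∑ i ∈ s, A i).rank ≤ ∑ i ∈ s, (A i).rank :=
  Finset.le_sum_of_subadditive (fun B : Matrix m n K => B.rank) rank_zero.le rank_add_le s A

theorem card_le_card_mul_rank_of_sum_mul_mul_eq_one [DecidableEq n] [Fintype l] [Fintype o]
    [Fintype ι] (u : ι → Matrix n l K) (p : Matrix l o K) (v : ι → Matrix o n K)
    (h : ∑ i, u i * p * v i = 1) : Fintype.card n ≤ Fintype.card ι * p.rank :=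
  calc Fintype.card n = (∑ i, u i * p * v i).rank := by rw [h, rank_one]
    _ ≤ ∑ i, (u i * p * v i).rank := rank_sum_le _ _
    _ ≤ ∑ _i : ι, p.rank := Finset.sum_le_sum fun i _ =>
        (rank_mul_le_left _ _).trans (rank_mul_le_right _ _)
    _ = Fintype.card ι * p.rank := by rw [Finset.sum_const, smul_eq_mul, Finset.card_univ]

theorem eq_one_of_forall_mul_single_eq [DecidableEq n] {R : Type*} [Semiring R]
    (M : Matrix n n R) (j : n) (h : ∀ k, M * single k j 1 = single k j 1) : M = 1 := by
  ext a k
  have hkj := congrFun (congrFun (h k) a) j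
  rw [mul_single_apply_same, mul_one, single_apply] at hkj
  simpa [one_apply, eq_comm] using hkj

end Matrix

theorem sum_mul_mul_mul_eq_self_of_quasiBasis {A ι : Type*} [Ring A] [Fintype ι] {p : A}
    (E : A → A) (hE : ∀ y, E y = p * y * p + (1 - p) * y * (1 - p)) (u v : ι → A)
    (hqb : ∀ x, x = ∑ i, u i * E (v i * x)) {x : A} (hx : x * p = x) :
    (∑ i, u i * p * v i) * x = x := by
  have hx' : x * (1 - p) = 0 := by rw [mul_sub, mul_one, hx, sub_self]
  conv_rhs => rw [hqb x]
  simp only [hE, Finset.sum_mul, mul_assoc, hx, hx', mul_zero, add_zero]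

/-- Let `p = e₁₁` be a rank-one projection in `Mₙ(ℂ)` and
`E x = p x p + (1-p) x (1-p)` the conditional expectation onto
`p Mₙ(ℂ) p ⊕ (1-p) Mₙ(ℂ) (1-p)`.  If `{(u i, (u i)⋆)}` (with `m` elements)
is a quasi-basis for `E`, then necessarily `m ≥ n`. -/
theorem stmt_7 (n m : ℕ) [NeZero n]
    (p : Matrix (Fin n) (Fin n) ℂ) (hp : p = Matrix.single 0 0 1)
    (E : Matrix (Fin n) (Fin n) ℂ → Matrix (Fin n) (Fin n) ℂ)
    (hE : ∀ x, E x = p * x * p + (1 - p) * x * (1 - p))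
    (u : Fin m → Matrix (Fin n) (Fin n) ℂ)
    (hqb : ∀ x, x = ∑ i, u i * E (star (u i) * x)) :
    n ≤ m := by
  have hsum : ∑ i, u i * p * star (u i) = 1 :=
    Matrix.eq_one_of_forall_mul_single_eq _ 0 fun k =>
      sum_mul_mul_mul_eq_self_of_quasiBasis E hE u (star u) hqb (by simp [hp])
  have hrank : p.rank ≤ 1 := by
    rw [hp, Matrix.single_eq_single_vecMulVec_single]
    exact Matrix.rank_vecMulVec_le _ _
  calc n = Fintype.card (Fin n) := (Fintype.card_fin n).symm
    _ ≤ Fintype.card (Fin m) * p.rank :=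
      Matrix.card_le_card_mul_rank_of_sum_mul_mul_eq_one u p (star u) hsum
    _ ≤ m * 1 := by rw [Fintype.card_fin]; gcongr
    _ = m := mul_one m
end

section
/- For n = 2,3,4,5,6,7, the group ℤ²/(1−D^n)ℤ² where D = [[1,1],[1,0]] is isomorphic to, respectively: the trivial group, ℤ/2ℤ ⊕ ℤ/2ℤ, ℤ/5ℤ, ℤ/11ℤ, ℤ/4ℤ ⊕ ℤ/4ℤ, ℤ/29ℤ. -/
open Matrix in
/-- Coker of `M` is `ZMod a × ZMod b` given an explicit Smith decomposition. -/
lemma coker_equiv_aux (M A A' B B' : Matrix (Fin 2) (Fin 2) ℤ) (a b : ℕ)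
    (hA : A * A' = 1) (hA' : A' * A = 1) (hB : B * B' = 1) (hB' : B' * B = 1)
    (h : A * M * B = !![(a : ℤ), 0; 0, (b : ℤ)]) :
    Nonempty (((Fin 2 → ℤ) ⧸ LinearMap.range M.mulVecLin) ≃+ (ZMod a × ZMod b)) := by
  set S : Matrix (Fin 2) (Fin 2) ℤ := !![(a : ℤ), 0; 0, (b : ℤ)] with hS
  -- linear equivs from A and B
  let eA : (Fin 2 → ℤ) ≃ₗ[ℤ] (Fin 2 → ℤ) :=
    LinearEquiv.ofLinear A.mulVecLin A'.mulVecLin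
      (by rw [← Matrix.mulVecLin_mul, hA, Matrix.mulVecLin_one])
      (by rw [← Matrix.mulVecLin_mul, hA', Matrix.mulVecLin_one])
  let eB : (Fin 2 → ℤ) ≃ₗ[ℤ] (Fin 2 → ℤ) :=
    LinearEquiv.ofLinear B.mulVecLin B'.mulVecLin
      (by rw [← Matrix.mulVecLin_mul, hB, Matrix.mulVecLin_one])
      (by rw [← Matrix.mulVecLin_mul, hB', Matrix.mulVecLin_one])
  have h1 : LinearMap.range M.mulVecLin = LinearMap.range (M * B).mulVecLin := by
    rw [Matrix.mulVecLin_mul]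
    exact (LinearMap.range_comp_of_range_eq_top _
      (LinearMap.range_eq_top.mpr eB.surjective)).symm
  have h2 : Submodule.map (eA : (Fin 2 → ℤ) →ₗ[ℤ] (Fin 2 → ℤ))
      (LinearMap.range (M * B).mulVecLin) = LinearMap.range S.mulVecLin := by
    rw [← LinearMap.range_comp]
    have : (eA : (Fin 2 → ℤ) →ₗ[ℤ] (Fin 2 → ℤ)) = A.mulVecLin := rfl
    rw [this, ← Matrix.mulVecLin_mul, ← mul_assoc, h]
  -- the map to ZMod a × ZMod b
  let f : (Fin 2 → ℤ) →ₗ[ℤ] ZMod a × ZMod b :=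
    LinearMap.prod
      ((Int.castAddHom (ZMod a)).toIntLinearMap.comp (LinearMap.proj 0))
      ((Int.castAddHom (ZMod b)).toIntLinearMap.comp (LinearMap.proj 1))
  have hfapp : ∀ v : Fin 2 → ℤ, f v = (((v 0 : ℤ) : ZMod a), ((v 1 : ℤ) : ZMod b)) :=
    fun v => rfl
  have hker : LinearMap.range S.mulVecLin = LinearMap.ker f := by
    ext x
    constructor
    · rintro ⟨v, rfl⟩
      simp only [LinearMap.mem_ker, hfapp, Matrix.mulVecLin_apply]
      have h0 : S.mulVec v 0 = (a : ℤ) * v 0 := by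
        simp [hS, Matrix.mulVec, dotProduct, Fin.sum_univ_two]
      have h1 : S.mulVec v 1 = (b : ℤ) * v 1 := by
        simp [hS, Matrix.mulVec, dotProduct, Fin.sum_univ_two]
      rw [h0, h1]
      ext <;> push_cast <;> simp [ZMod.natCast_self]
    · intro hx
      simp only [LinearMap.mem_ker, hfapp, Prod.mk_eq_zero] at hx
      obtain ⟨hx0, hx1⟩ := hx
      obtain ⟨c, hc⟩ := (ZMod.intCast_zmod_eq_zero_iff_dvd _ _).mp hx0
      obtain ⟨d, hd⟩ := (ZMod.intCast_zmod_eq_zero_iff_dvd _ _).mp hx1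
      refine ⟨![c, d], ?_⟩
      ext i
      fin_cases i <;>
        simp [hS, Matrix.mulVecLin_apply, Matrix.mulVec, dotProduct,
          Fin.sum_univ_two, hc, hd]
  have hsurj : Function.Surjective f := by
    intro ⟨x, y⟩
    obtain ⟨c, rfl⟩ := ZMod.intCast_surjective x
    obtain ⟨d, rfl⟩ := ZMod.intCast_surjective y
    exact ⟨![c, d], by rw [hfapp]; simp⟩
  exact ⟨((Submodule.quotEquivOfEq _ _ h1).trans
    ((Submodule.Quotient.equiv _ _ eA h2).trans
      ((Submodule.quotEquivOfEq _ _ hker).trans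
        (f.quotKerEquivOfSurjective hsurj)))).toAddEquiv⟩

/-- Drop a trivial `ZMod 1` factor. -/
def zmodOneProdEquiv (n : ℕ) : (ZMod 1 × ZMod n) ≃+ ZMod n where
  toFun := Prod.snd
  invFun := fun x => (0, x)
  left_inv := fun p => by
    ext
    · exact Subsingleton.elim _ _
    · rfl
  right_inv := fun _ => rfl
  map_add' := fun _ _ => rfl

/-- The cokernel `ℤ² / (1 - Dⁿ)ℤ²` of the integer matrix `1 - Dⁿ`, where
`D = [[1,1],[1,0]]` is the Fibonacci matrix. -/
abbrev fibCoker (n : ℕ) :=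
  (Fin 2 → ℤ) ⧸ LinearMap.range
    (Matrix.mulVecLin ((1 : Matrix (Fin 2) (Fin 2) ℤ) - (!![1, 1; 1, 0] : Matrix (Fin 2) (Fin 2) ℤ) ^ n))

/-- For `n = 2,3,4,5,6,7` the group `ℤ²/(1 - Dⁿ)ℤ²` with
`D = [[1,1],[1,0]]` is isomorphic to, respectively: the trivial group,
`ℤ/2 ⊕ ℤ/2`, `ℤ/5`, `ℤ/11`, `ℤ/4 ⊕ ℤ/4`, `ℤ/29`. -/
theorem stmt_15 :
    Nonempty (fibCoker 2 ≃+ ZMod 1) ∧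
    Nonempty (fibCoker 3 ≃+ (ZMod 2 × ZMod 2)) ∧
    Nonempty (fibCoker 4 ≃+ ZMod 5) ∧
    Nonempty (fibCoker 5 ≃+ ZMod 11) ∧
    Nonempty (fibCoker 6 ≃+ (ZMod 4 × ZMod 4)) ∧
    Nonempty (fibCoker 7 ≃+ ZMod 29) := by
  have e2 : (1 : Matrix (Fin 2) (Fin 2) ℤ) - !![1,1;1,0] ^ 2 = !![-1,-1;-1,0] := by
    norm_num [pow_succ, Matrix.one_fin_two, Matrix.mul_fin_two]
    ext i j; fin_cases i <;> fin_cases j <;> simp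
  have e3 : (1 : Matrix (Fin 2) (Fin 2) ℤ) - !![1,1;1,0] ^ 3 = !![-2,-2;-2,0] := by
    norm_num [pow_succ, Matrix.one_fin_two, Matrix.mul_fin_two]
    ext i j; fin_cases i <;> fin_cases j <;> simp
  have e4 : (1 : Matrix (Fin 2) (Fin 2) ℤ) - !![1,1;1,0] ^ 4 = !![-4,-3;-3,-1] := by
    norm_num [pow_succ, Matrix.one_fin_two, Matrix.mul_fin_two]
    ext i j; fin_cases i <;> fin_cases j <;> simp
  have e5 : (1 : Matrix (Fin 2) (Fin 2) ℤ) - !![1,1;1,0] ^ 5 = !![-7,-5;-5,-2] := by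
    norm_num [pow_succ, Matrix.one_fin_two, Matrix.mul_fin_two]
    ext i j; fin_cases i <;> fin_cases j <;> simp
  have e6 : (1 : Matrix (Fin 2) (Fin 2) ℤ) - !![1,1;1,0] ^ 6 = !![-12,-8;-8,-4] := by
    norm_num [pow_succ, Matrix.one_fin_two, Matrix.mul_fin_two]
    ext i j; fin_cases i <;> fin_cases j <;> simp
  have e7 : (1 : Matrix (Fin 2) (Fin 2) ℤ) - !![1,1;1,0] ^ 7 = !![-20,-13;-13,-7] := by
    norm_num [pow_succ, Matrix.one_fin_two, Matrix.mul_fin_two]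
    ext i j; fin_cases i <;> fin_cases j <;> simp
  refine ⟨?_, ?_, ?_, ?_, ?_, ?_⟩
  · unfold fibCoker; rw [e2]
    obtain ⟨e⟩ := coker_equiv_aux !![-1,-1;-1,0] !![-1,0;-1,1] !![-1,0;-1,1]
      !![1,-1;0,1] !![1,1;0,1] 1 1
      (by norm_num [Matrix.mul_fin_two, ← Matrix.one_fin_two])
      (by norm_num [Matrix.mul_fin_two, ← Matrix.one_fin_two])
      (by norm_num [Matrix.mul_fin_two, ← Matrix.one_fin_two])
      (by norm_num [Matrix.mul_fin_two, ← Matrix.one_fin_two])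
      (by norm_num [Matrix.mul_fin_two])
    exact ⟨e.trans (zmodOneProdEquiv 1)⟩
  · unfold fibCoker; rw [e3]
    exact coker_equiv_aux !![-2,-2;-2,0] !![-1,0;-1,1] !![-1,0;-1,1]
      !![1,-1;0,1] !![1,1;0,1] 2 2
      (by norm_num [Matrix.mul_fin_two, ← Matrix.one_fin_two])
      (by norm_num [Matrix.mul_fin_two, ← Matrix.one_fin_two])
      (by norm_num [Matrix.mul_fin_two, ← Matrix.one_fin_two])
      (by norm_num [Matrix.mul_fin_two, ← Matrix.one_fin_two])
      (by norm_num [Matrix.mul_fin_two])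
  · unfold fibCoker; rw [e4]
    obtain ⟨e⟩ := coker_equiv_aux !![-4,-3;-3,-1] !![0,-1;1,-3] !![-3,1;-1,0]
      !![0,1;1,-3] !![3,1;1,0] 1 5
      (by norm_num [Matrix.mul_fin_two, ← Matrix.one_fin_two])
      (by norm_num [Matrix.mul_fin_two, ← Matrix.one_fin_two])
      (by norm_num [Matrix.mul_fin_two, ← Matrix.one_fin_two])
      (by norm_num [Matrix.mul_fin_two, ← Matrix.one_fin_two])
      (by norm_num [Matrix.mul_fin_two])
    exact ⟨e.trans (zmodOneProdEquiv 5)⟩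
  · unfold fibCoker; rw [e5]
    obtain ⟨e⟩ := coker_equiv_aux !![-7,-5;-5,-2] !![0,-1;-1,-3] !![3,-1;-1,0]
      !![1,-2;-2,5] !![5,2;2,1] 1 11
      (by norm_num [Matrix.mul_fin_two, ← Matrix.one_fin_two])
      (by norm_num [Matrix.mul_fin_two, ← Matrix.one_fin_two])
      (by norm_num [Matrix.mul_fin_two, ← Matrix.one_fin_two])
      (by norm_num [Matrix.mul_fin_two, ← Matrix.one_fin_two])
      (by norm_num [Matrix.mul_fin_two])
    exact ⟨e.trans (zmodOneProdEquiv 11)⟩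
  · unfold fibCoker; rw [e6]
    exact coker_equiv_aux !![-12,-8;-8,-4] !![0,-1;1,-2] !![-2,1;-1,0]
      !![0,1;1,-2] !![2,1;1,0] 4 4
      (by norm_num [Matrix.mul_fin_two, ← Matrix.one_fin_two])
      (by norm_num [Matrix.mul_fin_two, ← Matrix.one_fin_two])
      (by norm_num [Matrix.mul_fin_two, ← Matrix.one_fin_two])
      (by norm_num [Matrix.mul_fin_two, ← Matrix.one_fin_two])
      (by norm_num [Matrix.mul_fin_two])
  · unfold fibCoker; rw [e7]
    obtain ⟨e⟩ := coker_equiv_aux !![-20,-13;-13,-7] !![1,-2;7,-13] !![-13,2;-7,1]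
      !![0,1;1,-6] !![6,1;1,0] 1 29
      (by norm_num [Matrix.mul_fin_two, ← Matrix.one_fin_two])
      (by norm_num [Matrix.mul_fin_two, ← Matrix.one_fin_two])
      (by norm_num [Matrix.mul_fin_two, ← Matrix.one_fin_two])
      (by norm_num [Matrix.mul_fin_two, ← Matrix.one_fin_two])
      (by norm_num [Matrix.mul_fin_two])
    exact ⟨e.trans (zmodOneProdEquiv 29)⟩
end

section
/- Let A be a von Neumann algebra (or unital C*-algebra) with trace τ, v a self-adjoint unitary, e_± the spectral projections of v for eigenvalues ±1, and E(x) = (x + vxv*)/2 = e₊xe₊ + e₋xe₋. If {(u_i, u_i*)}_{i=1}^n is a quasi-basis for E, then 1 = Σ_i u_i e₊ u_i* = Σ_i u_i e₋ u_i*, and consequently n ≥ 1/τ(e₋). -/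
/-!
Applying the quasi-basis expansion to `y * e₊` gives `(∑ uᵢ e₊ uᵢ⋆ - 1) * y * e₊ = 0` for all `y`,
so full central support forces `∑ uᵢ e₊ uᵢ⋆ = 1`; likewise for `e₋`. Then `wᵢ = uᵢ e₋` satisfy
`∑ wᵢ wᵢ⋆ = 1`, so `wᵢ wᵢ⋆ ≤ 1`, and the sum-of-squares identity
`e₋ - wᵢ⋆ wᵢ = (e₋ - wᵢ⋆ wᵢ)(e₋ - wᵢ⋆ wᵢ)⋆ + wᵢ⋆ (1 - wᵢ wᵢ⋆) wᵢ` upgrades this to `wᵢ⋆ wᵢ ≤ e₋`.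
Traciality then gives `1 = ∑ τ(wᵢ⋆ wᵢ) ≤ n τ(e₋)`.
-/

open scoped ComplexOrder

theorem sum_mul_mul_eq_one_of_quasiBasis {R ι : Type*} [Ring R] [Fintype ι] {p : R}
    (hfull : ∀ y : R, (∀ x : R, y * (x * p) = 0) → y = 0)
    {E : R → R} (hE : ∀ x, E (x * p) = p * x * p)
    (u w : ι → R) (hqb : ∀ x, x = ∑ i, u i * E (w i * x)) :
    ∑ i, u i * p * w i = 1 := by
  refine sub_eq_zero.mp (hfull _ fun y => ?_)
  have hyp : y * p = ∑ i, u i * p * w i * (y * p) := by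
    simpa only [← mul_assoc, hE] using hqb (y * p)
  rw [sub_mul, Finset.sum_mul, one_mul, ← hyp, sub_self]

section StarOrderedRing

variable {R : Type*} [Ring R] [StarRing R] [PartialOrder R] [StarOrderedRing R]

theorem star_mul_self_le_of_mul_star_self_le_one {p w : R} (hp : IsStarProjection p)
    (hwp : w * p = w) (hw : w * star w ≤ 1) : star w * w ≤ p := by
  have hpw : p * star w = star w := by
    simpa only [star_mul, hp.isSelfAdjoint.star_eq] using congrArg star hwp
  have hsq : p - star w * w
      = (p - star w * w) * star (p - star w * w) + star w * (1 - w * star w) * w := by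
    rw [star_sub, star_mul, star_star, hp.isSelfAdjoint.star_eq]
    simp only [mul_sub, sub_mul, mul_one, ← mul_assoc, hp.isIdempotentElem.eq, hpw]
    simp only [mul_assoc, hwp]
    abel
  rw [← sub_nonneg, hsq]
  exact add_nonneg (mul_star_self_nonneg _)
    (star_left_conjugate_nonneg (sub_nonneg.mpr hw) w)

theorem map_one_le_card_nsmul_of_sum_mul_star_eq_one {S ι : Type*} [AddCommGroup S]
    [PartialOrder S] [IsOrderedAddMonoid S] [Fintype ι] (τ : R →+ S)
    (hτpos : ∀ x, 0 ≤ x → 0 ≤ τ x) (hτtr : ∀ x y, τ (x * y) = τ (y * x))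
    {p : R} (hp : IsStarProjection p) (w : ι → R) (hwp : ∀ i, w i * p = w i)
    (hw : ∑ i, w i * star (w i) = 1) :
    τ 1 ≤ Fintype.card ι • τ p := by
  have hle : ∀ i, τ (star (w i) * w i) ≤ τ p := fun i => by
    have hw1 : w i * star (w i) ≤ 1 :=
      hw ▸ Finset.single_le_sum (fun j _ => mul_star_self_nonneg (w j)) (Finset.mem_univ i)
    have := hτpos _ (sub_nonneg.mpr (star_mul_self_le_of_mul_star_self_le_one hp (hwp i) hw1))
    rwa [map_sub, sub_nonneg] at this
  calc τ 1 = ∑ i, τ (star (w i) * w i) := by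
        rw [← hw, map_sum]
        exact Finset.sum_congr rfl fun i _ => hτtr _ _
    _ ≤ ∑ _i : ι, τ p := Finset.sum_le_sum fun i _ => hle i
    _ = Fintype.card ι • τ p := by rw [Finset.sum_const, Finset.card_univ]

end StarOrderedRing

theorem stmt_17_general {A : Type*} [NormedRing A] [StarRing A] [NormedAlgebra ℂ A]
    [PartialOrder A] [StarOrderedRing A]
    (τ : A →L[ℂ] ℂ) (hτ1 : τ 1 = 1)
    (hτpos : ∀ x : A, 0 ≤ x → 0 ≤ τ x)
    (hτtr : ∀ x y : A, τ (x * y) = τ (y * x))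
    (ep em : A)
    (hsum : ep + em = 1)
    (hep_idem : IsIdempotentElem ep)
    (hem_idem : IsIdempotentElem em) (hem_sa : star em = em)
    (hfull_p : ∀ y : A, (∀ x : A, y * (x * ep) = 0) → y = 0)
    (hfull_m : ∀ y : A, (∀ x : A, y * (x * em) = 0) → y = 0)
    (E : A → A) (hE : ∀ x : A, E x = ep * x * ep + em * x * em)
    {n : ℕ} (u : Fin n → A)
    (hqb : ∀ x : A, x = ∑ i, u i * E (star (u i) * x)) :
    (∑ i, u i * ep * star (u i)) = 1 ∧
    (∑ i, u i * em * star (u i)) = 1 ∧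
    1 ≤ (n : ℝ) * (τ em).re := by
  have hem : em = 1 - ep := eq_sub_of_add_eq' hsum
  have hE_ep (x : A) : E (x * ep) = ep * x * ep := by
    simp only [hE, mul_assoc, hem, hep_idem.mul_one_sub_self, mul_zero, add_zero, hep_idem.eq]
  have hE_em (x : A) : E (x * em) = em * x * em := by
    simp only [hE, mul_assoc, hem, hep_idem.one_sub_mul_self, mul_zero, zero_add,
      hep_idem.one_sub.eq]
  have hsum_ep := sum_mul_mul_eq_one_of_quasiBasis hfull_p hE_ep u _ hqb
  have hsum_em := sum_mul_mul_eq_one_of_quasiBasis hfull_m hE_em u _ hqb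
  refine ⟨hsum_ep, hsum_em, ?_⟩
  have hw : ∑ i, u i * em * star (u i * em) = 1 := by
    refine hsum_em ▸ Finset.sum_congr rfl fun i _ => ?_
    rw [star_mul, hem_sa, ← mul_assoc, mul_assoc (u i), hem_idem.eq]
  have hτ := map_one_le_card_nsmul_of_sum_mul_star_eq_one (τ : A →+ ℂ) hτpos hτtr
    ⟨hem_idem, hem_sa⟩ (fun i => u i * em) (fun i => by rw [mul_assoc, hem_idem.eq]) hw
  simpa [hτ1] using (Complex.le_def.mp hτ).1

/-- Let `A` carry a tracial state `τ`, let `v = e₊ - e₋` be a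
self-adjoint unitary with spectral projections `e₊ + e₋ = 1` each of full
central support, and `E x = e₊ x e₊ + e₋ x e₋` the conditional expectation onto
the fixed point algebra of `Ad v`.  If `{(u i, (u i)⋆)}` (with `n` elements) is
a quasi-basis for `E`, then `1 = ∑ u i * e₊ * (u i)⋆ = ∑ u i * e₋ * (u i)⋆`,
and consequently `n ≥ 1/τ(e₋)`, i.e. `1 ≤ n * τ(e₋)`. -/
theorem stmt_17 {A : Type*} [NormedRing A] [StarRing A] [CStarRing A] [NormedAlgebra ℂ A]
    [StarModule ℂ A] [CompleteSpace A] [PartialOrder A] [StarOrderedRing A] [Nontrivial A]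
    (τ : A →L[ℂ] ℂ) (hτ1 : τ 1 = 1)
    (hτpos : ∀ x : A, 0 ≤ x → 0 ≤ τ x)
    (hτtr : ∀ x y : A, τ (x * y) = τ (y * x))
    (hτfaith : ∀ x : A, 0 ≤ x → τ x = 0 → x = 0)
    (v ep em : A)
    (hsum : ep + em = 1) (hv : v = ep - em)
    (hep_idem : IsIdempotentElem ep) (hep_sa : star ep = ep)
    (hem_idem : IsIdempotentElem em) (hem_sa : star em = em)
    (hfull_p : ∀ y : A, (∀ x : A, y * (x * ep) = 0) → y = 0)
    (hfull_m : ∀ y : A, (∀ x : A, y * (x * em) = 0) → y = 0)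
    (E : A → A) (hE : ∀ x : A, E x = ep * x * ep + em * x * em)
    {n : ℕ} (u : Fin n → A)
    (hqb : ∀ x : A, x = ∑ i, u i * E (star (u i) * x)) :
    (∑ i, u i * ep * star (u i)) = 1 ∧
    (∑ i, u i * em * star (u i)) = 1 ∧
    1 ≤ (n : ℝ) * (τ em).re :=
  stmt_17_general τ hτ1 hτpos hτtr ep em hsum hep_idem hem_idem hem_sa hfull_p hfull_m E hE u hqb
end

section
/- Let [ρ] be a sector with fusion rule [ρ]² = [Id] ⊕ [ρ] and statistical dimension d(ρ)² = (3+√5)/2 < 3. Given an irreducible representation π of the algebra, the composition π∘ρ decomposes into at most two irreducibles, and there exist disjoint irreducible representations π₁, π₂ with π₁∘ρ ≅ π₂ and π₂∘ρ ≅ π₁ ⊕ π₂. (Purely combinatorial version: in the fusion ring ℤ[σ]/(σ² − σ − 1), for the induced action on the Grothendieck group of representations, if π·σ has at most 2 irreducible summands then one can find π₁, π₂ distinct irreducible classes with π₁·σ = π₂ and π₂·σ = π₁ + π₂.) -/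
open Finsupp

lemma classify18 {Irr : Type*} (f : Irr →₀ ℕ) (hne : f ≠ 0)
    (hmass : f.sum (fun _ k => k) ≤ 2) :
    (∃ τ, f = Finsupp.single τ 1) ∨ (∃ τ, f = Finsupp.single τ 2) ∨
    (∃ τ τ', τ ≠ τ' ∧ f = Finsupp.single τ 1 + Finsupp.single τ' 1) := by
  classical
  have hsum : f.sum (fun _ k => k) = ∑ a ∈ f.support, f a := rfl
  have hcard : f.support.card ≤ 2 := by
    calc f.support.card = ∑ _a ∈ f.support, 1 := by simp
    _ ≤ ∑ a ∈ f.support, f a := Finset.sum_le_sum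
        (fun a ha => Nat.one_le_iff_ne_zero.2 (Finsupp.mem_support_iff.1 ha))
    _ ≤ 2 := hsum ▸ hmass
  have h0 : f.support.card ≠ 0 := fun h =>
    hne (Finsupp.support_eq_empty.1 (Finset.card_eq_zero.1 h))
  rcases (by omega : f.support.card = 1 ∨ f.support.card = 2) with h1 | h2
  · obtain ⟨a, b, hb0, hfa⟩ := Finsupp.card_support_eq_one'.1 h1
    have hb2 : b ≤ 2 := by
      have := hmass
      rw [hfa, Finsupp.sum_single_index rfl] at this
      exact this
    interval_cases b
    · exact absurd rfl hb0
    · exact Or.inl ⟨a, hfa⟩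
    · exact Or.inr (Or.inl ⟨a, hfa⟩)
  · obtain ⟨a, b, hab, hsupp⟩ := Finset.card_eq_two.1 h2
    have ha : f a ≠ 0 := Finsupp.mem_support_iff.1 (by rw [hsupp]; simp)
    have hb : f b ≠ 0 := Finsupp.mem_support_iff.1 (by rw [hsupp]; simp)
    have hs2 : f a + f b ≤ 2 := by
      have := hmass
      rw [hsum, hsupp, Finset.sum_pair hab] at this
      exact this
    have hfa1 : f a = 1 := by omega
    have hfb1 : f b = 1 := by omega
    refine Or.inr (Or.inr ⟨a, b, hab, ?_⟩)
    ext x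
    by_cases hxa : x = a
    · simp [hxa, hfa1, Finsupp.single_apply, hab, Ne.symm hab]
    · by_cases hxb : x = b
      · simp [hxb, hfb1, Finsupp.single_apply, Ne.symm hab, hab]
      · have : x ∉ f.support := by rw [hsupp]; simp [hxa, hxb]
        have hx0 : f x = 0 := Finsupp.notMem_support_iff.1 this
        simp [hx0, Finsupp.single_apply, Ne.symm hxa, Ne.symm hxb]

/-- **combinatorial version.** Let `Irr` be the set of classes
of irreducible representations and `σa π` the decomposition of `π·σ` into
irreducibles (a finitely supported multiplicity function), where `σ` is a
self-conjugate sector with fusion rule `σ² = Id ⊕ σ`.  Assume: every `π·σ` is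
nonzero with at most `2` irreducible summands (since `d(σ)² = (3+√5)/2 < 3`),
Frobenius symmetry `⟨π·σ, ρ⟩ = ⟨ρ·σ, π⟩`, and the fusion rule
`(π·σ)·σ = π + π·σ`.  Then there exist distinct irreducibles `π₁, π₂` with
`π₁·σ = π₂` and `π₂·σ = π₁ + π₂`. -/
theorem stmt_18 {Irr : Type*} (σa : Irr → (Irr →₀ ℕ))
    (hne : ∀ π, σa π ≠ 0)
    (hmass : ∀ π, (σa π).sum (fun _ k => k) ≤ 2)
    (hsym : ∀ π ρ : Irr, σa π ρ = σa ρ π)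
    (hsq : ∀ π : Irr, ((σa π).sum fun ρ k => k • σa ρ) = Finsupp.single π 1 + σa π) :
    ∀ π : Irr, ∃ π₁ π₂ : Irr, π₁ ≠ π₂ ∧
      σa π₁ = Finsupp.single π₂ 1 ∧
      σa π₂ = Finsupp.single π₁ 1 + Finsupp.single π₂ 1 := by
  classical
  intro π
  rcases classify18 (σa π) (hne π) (hmass π) with ⟨τ, hτ⟩ | ⟨τ, hτ⟩ | ⟨τ, τ', hne', hτ⟩
  · -- σa π = single τ 1
    have h := hsq π
    rw [hτ, Finsupp.sum_single_index (by simp)] at h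
    -- h : 1 • σa τ = single π 1 + single τ 1
    rw [one_smul] at h
    have hτπ : τ ≠ π := by
      intro e
      subst e
      rw [hτ] at h
      have := congrArg (fun g => g τ) h
      simp at this
    exact ⟨π, τ, Ne.symm hτπ, hτ, h⟩
  · -- σa π = single τ 2 : contradiction by parity at π
    exfalso
    have h := hsq π
    rw [hτ, Finsupp.sum_single_index (by simp)] at h
    have h' := congrArg (fun g => g π) h
    simp only [Finsupp.smul_apply, Finsupp.add_apply, Finsupp.single_apply, smul_eq_mul] at h'
    by_cases hτπ : τ = π <;> simp [hτπ] at h' <;> omega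
  · -- σa π = single τ 1 + single τ' 1
    have h := hsq π
    rw [hτ, Finsupp.sum_add_index' (by simp) (by intros; rw [add_smul]),
      Finsupp.sum_single_index (by simp), Finsupp.sum_single_index (by simp),
      one_smul, one_smul] at h
    -- h : σa τ + σa τ' = single π 1 + (single τ 1 + single τ' 1)
    have hτπv : σa τ π = 1 := by rw [hsym, hτ]; simp [Finsupp.single_apply, hne', Ne.symm hne']
    have hτ'πv : σa τ' π = 1 := by
      rw [hsym, hτ]; simp [Finsupp.single_apply, hne', Ne.symm hne']
    have hπ := congrArg (fun g => g π) h
    simp only [Finsupp.add_apply, Finsupp.single_apply, hτπv, hτ'πv] at hπ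
    -- hπ : 1 + 1 = (if π = π then 1 else 0) + ((if τ = π ...) + (if τ' = π ...))
    by_cases hτeq : τ = π
    · -- then τ' ≠ π; σa τ' = single π 1
      subst hτeq
      have hστ' : σa τ' = Finsupp.single τ 1 := by
        ext x
        have hx := congrArg (fun g => g x) h
        simp only [Finsupp.add_apply] at hx
        have hτx : σa τ x = Finsupp.single τ 1 x + Finsupp.single τ' 1 x := by
          rw [hτ]; simp
        omega
      refine ⟨τ', τ, Ne.symm hne', hστ', ?_⟩
      rw [hτ, add_comm]
    · have hτ'eq : τ' = π := by
        by_cases h' : τ' = π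
        · exact h'
        · simp [hτeq, h'] at hπ
      subst hτ'eq
      have hστ : σa τ = Finsupp.single τ' 1 := by
        ext x
        have hx := congrArg (fun g => g x) h
        simp only [Finsupp.add_apply] at hx
        have hτx : σa τ' x = Finsupp.single τ 1 x + Finsupp.single τ' 1 x := by
          rw [hτ]; simp
        omega
      exact ⟨τ, τ', hne', hστ, hτ⟩
end
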